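/- Fix reals X > 0, c > 0, P > 0, m ∈ ℝ, and let h_ext(t) := Σ_{l∈ℤ} (X/(√(2π)·c))·exp(−(t + l·P − m)²/(2c²)). Then for every integer n ≥ 1 and every real a > 0, the n-th Fourier coefficient h^(n) := (1/P)·∫₀^P h_ext(t)·exp(−2πi·n·t/P) dt satisfies |h^(n)| ≤ (X/P)·exp(a²/(2c²))·exp(−2π·n·a/P). -/

import Mathlib

/-!
Unfolding the periodization, `h^(n) = (1/P) · 𝓕 h (n/P)`, and the Fourier transform of the
Gaussian is `X · e^{-2πimξ} · e^{-2π²c²ξ²}`, so `|h^(n)| = (X/P) · e^{-2π²c²n²/P²}` exactly.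
Completing the square, `2π²c²ξ² + a²/(2c²) - 2πξa = (a - 2πc²ξ)²/(2c²) ≥ 0`, gives the bound.
-/

open Real MeasureTheory Asymptotics Filter Set TopologicalSpace
open Complex (I)
open scoped Complex FourierTransform

section Periodization

variable {E : Type*} [NormedAddCommGroup E]

theorem summable_norm_restrict_comp_add_int_mul (f : C(ℝ, E)) {b : ℝ} (hb : 1 < b)
    (hf : f =O[cocompact ℝ] (|·| ^ (-b))) {P : ℝ} (hP : P ≠ 0) (K : Compacts ℝ) :
    Summable fun n : ℤ => ‖(f.comp (ContinuousMap.addRight (n * P))).restrict K‖ := by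
  have hO := (isBigO_norm_restrict_cocompact f (zero_lt_one.trans hb) hf K).comp_tendsto
    (Int.tendsto_zmultiplesHom_cofinite hP)
  refine summable_of_isBigO ((Real.summable_abs_int_rpow hb).mul_right (|P| ^ (-b))) ?_
  simpa [Function.comp_def, zsmul_eq_mul, abs_mul,
    Real.mul_rpow (abs_nonneg _) (abs_nonneg _)] using hO

variable [NormedSpace ℝ E]

theorem MeasureTheory.Integrable.hasSum_intervalIntegral_comp_add_int_mul {f : ℝ → E}
    (hf : Integrable f) {P : ℝ} (hP : 0 < P) :
    HasSum (fun n : ℤ => ∫ t in (0 : ℝ)..P, f (t + n * P)) (∫ t, f t) := by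
  simp_rw [intervalIntegral.integral_comp_add_right, zero_add,
    intervalIntegral.integral_of_le (le_add_of_nonneg_left hP.le)]
  rw [← setIntegral_univ, ← iUnion_Ioc_zsmul hP]
  simpa [zsmul_eq_mul, add_mul, add_comm] using
    hasSum_integral_iUnion (fun _ => measurableSet_Ioc) (pairwise_disjoint_Ioc_zsmul P)
      hf.integrableOn

theorem intervalIntegral_tsum_comp_add_int_mul {f : ℝ → E} (hf : Continuous f) {b : ℝ}
    (hb : 1 < b) (hdecay : f =O[cocompact ℝ] (|·| ^ (-b))) {P : ℝ} (hP : 0 < P) :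
    ∫ t in (0 : ℝ)..P, ∑' n : ℤ, f (t + n * P) = ∫ t, f t := by
  let F : C(ℝ, E) := ⟨f, hf⟩
  have hint : Integrable f := Real.integrable_of_summable_norm_Icc (f := F) (by
    simpa using summable_norm_restrict_comp_add_int_mul F hb hdecay one_ne_zero
      ⟨Icc 0 1, isCompact_Icc⟩)
  rw [← (hint.hasSum_intervalIntegral_comp_add_int_mul hP).tsum_eq]
  exact (intervalIntegral.tsum_intervalIntegral_eq_of_summable_norm
    (summable_norm_restrict_comp_add_int_mul F hb hdecay hP.ne' ⟨uIcc 0 P, isCompact_uIcc⟩)).symm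

end Periodization

theorem intervalIntegral_tsum_comp_add_int_mul_mul_cexp_eq_fourier {f : ℝ → ℂ}
    (hf : Continuous f) {b : ℝ} (hb : 1 < b) (hdecay : f =O[cocompact ℝ] (|·| ^ (-b)))
    {P : ℝ} (hP : 0 < P) (n : ℤ) :
    ∫ t in (0 : ℝ)..P, (∑' l : ℤ, f (t + l * P)) * cexp (-2 * π * I * n * t / P) =
      𝓕 f (n / P) := by
  set e : ℝ → ℂ := fun t => cexp (-2 * π * I * n * t / P)
  have he_periodic (t : ℝ) (l : ℤ) : e (t + l * P) = e t := by
    have hP' : (P : ℂ) ≠ 0 := by exact_mod_cast hP.ne'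
    simp only [e]
    rw [show -2 * π * I * n * ((t + l * P : ℝ) : ℂ) / P =
      -2 * π * I * n * t / P + (-(n * l) : ℤ) * (2 * π * I) by push_cast; field_simp; ring,
      Complex.exp_add, Complex.exp_int_mul_two_pi_mul_I, mul_one]
  have he_norm (t : ℝ) : ‖e t‖ = 1 := by simp [e, Complex.norm_exp]
  have hdecay' : (fun t => f t * e t) =O[cocompact ℝ] (|·| ^ (-b)) :=
    isBigO_norm_left.mp <| (isBigO_norm_left.mpr hdecay).congr_left fun t => by
      rw [norm_mul, he_norm, mul_one]
  calc ∫ t in (0 : ℝ)..P, (∑' l : ℤ, f (t + l * P)) * e t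
      = ∫ t in (0 : ℝ)..P, ∑' l : ℤ, f (t + l * P) * e (t + l * P) := by
        simp_rw [he_periodic, tsum_mul_right]
    _ = ∫ t, f t * e t := intervalIntegral_tsum_comp_add_int_mul
        (hf.mul (by fun_prop)) hb hdecay' hP
    _ = 𝓕 f (n / P) := by
        rw [fourier_real_eq_integral_exp_smul]
        congr 1 with t
        rw [smul_eq_mul, mul_comm]
        simp only [e]
        congr 2
        push_cast
        ring

noncomputable def gaussianPulse (X c m t : ℝ) : ℝ :=
  X / (√(2 * π) * c) * rexp (-(t - m) ^ 2 / (2 * c ^ 2))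

section GaussianPulse

variable {X c m : ℝ}

theorem ofReal_gaussianPulse (hc : c ≠ 0) (t : ℝ) :
    (gaussianPulse X c m t : ℂ) = (X / (√(2 * π) * c) : ℝ) * cexp (-(m ^ 2 / (2 * c ^ 2)) : ℝ) *
      cexp ((-(1 / (2 * c ^ 2)) : ℝ) * t ^ 2 + (m / c ^ 2 : ℝ) * t) := by
  have hc' : (c : ℂ) ≠ 0 := by exact_mod_cast hc
  rw [gaussianPulse, Complex.ofReal_mul, Complex.ofReal_exp, mul_assoc, ← Complex.exp_add]
  congr 2
  push_cast
  field_simp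
  ring

@[fun_prop]
theorem continuous_gaussianPulse : Continuous (gaussianPulse X c m) := by
  unfold gaussianPulse
  fun_prop

theorem isLittleO_gaussianPulse_cocompact (hc : c ≠ 0) (s : ℝ) :
    (fun t => (gaussianPulse X c m t : ℂ)) =o[cocompact ℝ] (|·| ^ s) := by
  simp_rw [ofReal_gaussianPulse hc]
  refine (cexp_neg_quadratic_isLittleO_abs_rpow_cocompact ?_ _ s).const_mul_left _
  rw [Complex.ofReal_re, neg_lt_zero]
  positivity

theorem fourier_gaussianPulse (hc : 0 < c) (ξ : ℝ) :
    𝓕 (fun t => (gaussianPulse X c m t : ℂ)) ξ =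
      X * cexp (-2 * π ^ 2 * c ^ 2 * ξ ^ 2 - 2 * π * I * m * ξ) := by
  have hc' : (c : ℂ) ≠ 0 := by exact_mod_cast hc.ne'
  have ha : (((-(1 / (2 * c ^ 2)) : ℝ)) : ℂ).re < 0 := by
    rw [Complex.ofReal_re, neg_lt_zero]
    positivity
  rw [fourier_real_eq_integral_exp_smul]
  simp_rw [ofReal_gaussianPulse hc.ne', smul_eq_mul, mul_left_comm _ (_ * _), ← Complex.exp_add]
  have hexponent (v : ℝ) : ((-2 * π * v * ξ : ℝ) : ℂ) * I +
      (((-(1 / (2 * c ^ 2)) : ℝ) : ℂ) * v ^ 2 + (m / c ^ 2 : ℝ) * v) =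
      ((-(1 / (2 * c ^ 2)) : ℝ) : ℂ) * v ^ 2 + ((m / c ^ 2 : ℝ) - 2 * π * I * ξ) * v + 0 := by
    push_cast
    ring
  have hsqrt : ((π : ℂ) / -((-(1 / (2 * c ^ 2)) : ℝ) : ℂ)) ^ (1 / 2 : ℂ) = (√(2 * π) * c : ℝ) := by
    rw [show (π : ℂ) / -((-(1 / (2 * c ^ 2)) : ℝ) : ℂ) = ((2 * π * c ^ 2 : ℝ) : ℂ) by
        push_cast; field_simp,
      show (1 / 2 : ℂ) = ((1 / 2 : ℝ) : ℂ) by norm_num, ← Complex.ofReal_cpow (by positivity),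
      ← Real.sqrt_eq_rpow, Real.sqrt_mul (by positivity), Real.sqrt_sq hc.le]
  simp_rw [hexponent, integral_const_mul, integral_cexp_quadratic ha, hsqrt]
  have hmass : ((√(2 * π) * c : ℝ) : ℂ) * (X / (√(2 * π) * c) : ℝ) = X := by
    have hs : √(2 * π) ≠ 0 := by positivity
    rw [← Complex.ofReal_mul]
    congr 1
    field_simp
  have hexp : cexp (0 - ((m / c ^ 2 : ℝ) - 2 * π * I * ξ) ^ 2 /
      (4 * ((-(1 / (2 * c ^ 2)) : ℝ) : ℂ))) * cexp ((-(m ^ 2 / (2 * c ^ 2)) : ℝ) : ℂ) =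
      cexp (-2 * π ^ 2 * c ^ 2 * ξ ^ 2 - 2 * π * I * m * ξ) := by
    rw [← Complex.exp_add]
    congr 1
    push_cast
    field_simp
    ring_nf
    simp only [Complex.I_sq]
    ring
  rw [← hmass, ← hexp]
  ring

theorem norm_fourier_gaussianPulse (hc : 0 < c) (ξ : ℝ) :
    ‖𝓕 (fun t => (gaussianPulse X c m t : ℂ)) ξ‖ = |X| * rexp (-2 * π ^ 2 * c ^ 2 * ξ ^ 2) := by
  rw [fourier_gaussianPulse hc, norm_mul, Complex.norm_real, Real.norm_eq_abs, Complex.norm_exp]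
  congr 2
  rw [Complex.sub_re]
  norm_cast
  simp

end GaussianPulse

theorem exp_neg_two_mul_pi_sq_mul_sq_le {c : ℝ} (hc : c ≠ 0) (a ξ : ℝ) :
    rexp (-2 * π ^ 2 * c ^ 2 * ξ ^ 2) ≤ rexp (a ^ 2 / (2 * c ^ 2)) * rexp (-2 * π * ξ * a) := by
  have hsquare : a ^ 2 / (2 * c ^ 2) + -2 * π * ξ * a - -2 * π ^ 2 * c ^ 2 * ξ ^ 2 =
      (a - 2 * π * c ^ 2 * ξ) ^ 2 / (2 * c ^ 2) := by
    field_simp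
    ring
  rw [← Real.exp_add, Real.exp_le_exp, ← sub_nonneg, hsquare]
  positivity

/-- Exponential decay of the Fourier coefficients of the `P`-periodized
Gaussian pulse: `|h^(n)| ≤ (X/P)·e^{a²/(2c²)}·e^{-2πna/P}` for all `n ≥ 1` and `a > 0`. -/
theorem fourier_coeff_decay (X c P m : ℝ) (hX : 0 < X) (hc : 0 < c) (hP : 0 < P)
    (hext : ℝ → ℝ)
    (hhext : ∀ t : ℝ, hext t = ∑' l : ℤ,
      (X / (Real.sqrt (2 * Real.pi) * c)) * Real.exp (-(t + (l : ℝ) * P - m) ^ 2 / (2 * c ^ 2)))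
    (coef : ℤ → ℂ)
    (hcoef : ∀ n : ℤ, coef n = (1 / (P : ℂ)) *
      ∫ t in (0:ℝ)..P, (hext t : ℂ) *
        Complex.exp (-2 * Real.pi * Complex.I * (n : ℂ) * (t : ℂ) / (P : ℂ))) :
    ∀ n : ℤ, 1 ≤ n → ∀ a : ℝ, 0 < a →
      ‖coef n‖ ≤ (X / P) * Real.exp (a ^ 2 / (2 * c ^ 2)) *
        Real.exp (-2 * Real.pi * (n : ℝ) * a / P) := by
  intro n _ a _
  have hcoef_eq : coef n = 1 / (P : ℂ) * 𝓕 (fun t => (gaussianPulse X c m t : ℂ)) (n / P) := by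
    rw [hcoef, ← intervalIntegral_tsum_comp_add_int_mul_mul_cexp_eq_fourier (by fun_prop)
      one_lt_two (isLittleO_gaussianPulse_cocompact hc.ne' _).isBigO hP n]
    congr 1
    refine intervalIntegral.integral_congr fun t _ => ?_
    rw [hhext, Complex.ofReal_tsum]
    rfl
  rw [hcoef_eq, norm_mul, norm_fourier_gaussianPulse hc, abs_of_pos hX, norm_div, norm_one,
    Complex.norm_real, Real.norm_eq_abs, abs_of_pos hP]
  calc 1 / P * (X * rexp (-2 * π ^ 2 * c ^ 2 * (n / P) ^ 2))
      ≤ 1 / P * (X * (rexp (a ^ 2 / (2 * c ^ 2)) * rexp (-2 * π * (n / P) * a))) := by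
        gcongr
        exact exp_neg_two_mul_pi_sq_mul_sq_le hc.ne' a _
    _ = X / P * rexp (a ^ 2 / (2 * c ^ 2)) * rexp (-2 * π * n * a / P) := by
        ring_nf
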